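/- arXiv:1903.03229 — 4 statements merged into one kernel-verified Lean document; each statement's English description precedes it below -/
import Mathlib

section
/- Correctness of hash-index introduction (equality filter elimination): let r : List α be a relation, e : α → K a key expression into a type K with decidable equality, and k : K a lookup key. Define the partition keys qk := (r.map e).dedup and the partition values qv x := r.filter (fun t => e t = x). Then r.filter (fun t => e t = k) is a permutation of (equivalently, equal as multisets to) qk.bind (fun x => (qv x).filter (fun t => e t = k)). -/
/-!
Partitioning by the key `e` and then filtering on `e t = k` leaves only the block of key `k`,
which is `r.filter (e · = k)` itself; since the partition keys are duplicate-free, that block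
occurs at most once in the concatenation, and it is missing only when no tuple has key `k`,
in which case the filter is empty anyway.
-/

namespace List

variable {α K : Type*} [DecidableEq K]

theorem filter_key_filter_key (r : List α) (e : α → K) (x k : K) :
    (r.filter (fun t => decide (e t = x))).filter (fun t => decide (e t = k)) =
      if x = k then r.filter (fun t => decide (e t = k)) else [] := by
  split_ifs with hxk
  · subst hxk
    simp [filter_filter]
  · simp only [filter_filter, filter_eq_nil_iff, Bool.and_eq_true, decide_eq_true_eq]
    rintro t - ⟨htk, htx⟩
    exact hxk (htx ▸ htk)

theorem Nodup.flatMap_ite_eq {β : Type*} {l : List K} (hl : l.Nodup) (k : K) (s : List β) :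
    l.flatMap (fun x => if x = k then s else []) = if k ∈ l then s else [] := by
  induction l with
  | nil => simp
  | cons a l ih =>
    obtain ⟨ha, hl⟩ := nodup_cons.mp hl
    rw [flatMap_cons, ih hl]
    by_cases hak : a = k
    · subst hak
      simp [ha]
    · simp [hak, Ne.symm hak]

theorem filter_key_eq_nil_of_notMem_map {r : List α} {e : α → K} {k : K} (hk : k ∉ r.map e) :
    r.filter (fun t => decide (e t = k)) = [] :=
  filter_eq_nil_iff.mpr fun t ht htk =>
    hk (mem_map.mpr ⟨t, ht, of_decide_eq_true htk⟩)

end List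

theorem hash_index_intro {α K : Type*} [DecidableEq K] (r : List α) (e : α → K) (k : K) :
    (r.filter (fun t => decide (e t = k))).Perm
      (((r.map e).dedup).flatMap
        (fun x => (r.filter (fun t => decide (e t = x))).filter (fun t => decide (e t = k)))) := by
  simp only [List.filter_key_filter_key, (List.nodup_dedup _).flatMap_ite_eq, List.mem_dedup]
  split_ifs with hk
  · rfl
  · rw [List.filter_key_eq_nil_of_notMem_map hk]
end

section
/- Correctness of the ordered-index introduction rule: let r : List α be a relation, e : α → K with K a linear order and decidable equality, and lo hi : K. Define qk := (r.map e).dedup and qv x := r.filter (fun t => e t = x). Then r.filter (fun t => lo ≤ e t ∧ e t ≤ hi) is a permutation of qk.bind (fun x => (qv x).filter (fun t => lo ≤ x ∧ x ≤ hi)) (where the bound check uses the key x, equivalently e t). -/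
/-!
Grouping `r` by the deduplicated keys of `e` is a permutation of `r`: every element lands in the
block of its own key, which occurs exactly once. A predicate that depends only on the key is
constant on each block, so filtering `r` commutes with the grouping and may be tested on the key.
-/

namespace List

variable {α K : Type*}

theorem count_filter_apply_eq [DecidableEq K] [BEq α] [LawfulBEq α] (r : List α) (e : α → K)
    (a : α) (x : K) :
    (r.filter fun t => e t = x).count a = if e a = x then r.count a else 0 := by
  split_ifs with h
  · exact count_filter (by simpa using h)
  · exact count_eq_zero.2 fun ha => h (by simpa using (mem_filter.1 ha).2)

theorem perm_flatMap_dedup_map_filter [DecidableEq K] (r : List α) (e : α → K) :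
    r.Perm ((r.map e).dedup.flatMap fun x => r.filter fun t => e t = x) := by
  classical
  refine perm_iff_count.2 fun a => ?_
  rw [count_flatMap, sum_map_eq_nsmul_single (e a) _ fun x hx _ => by
    simp [count_filter_apply_eq, Ne.symm hx]]
  rw [Function.comp_apply, count_filter_apply_eq, if_pos rfl, count_dedup]
  by_cases ha : a ∈ r
  · simp [mem_map_of_mem ha]
  · simp [count_eq_zero.2 ha]

theorem filter_comp_perm_flatMap_dedup_map_filter [DecidableEq K] (r : List α) (e : α → K)
    (q : K → Bool) :
    (r.filter (q ∘ e)).Perm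
      ((r.map e).dedup.flatMap fun x => (r.filter fun t => e t = x).filter fun _ => q x) := by
  refine ((perm_flatMap_dedup_map_filter r e).filter _).trans ?_
  rw [filter_flatMap]
  refine .of_eq (flatMap_congr fun x _ => filter_congr fun t ht => ?_)
  simp only [Function.comp_apply, (by simpa using (mem_filter.1 ht).2 : e t = x)]

end List

theorem ordered_index_intro {α K : Type*} [LinearOrder K] (r : List α) (e : α → K) (lo hi : K) :
    (r.filter (fun t => decide (lo ≤ e t ∧ e t ≤ hi))).Perm
      (((r.map e).dedup).flatMap
        (fun x => (r.filter (fun t => decide (e t = x))).filter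
          (fun _ => decide (lo ≤ x ∧ x ≤ hi)))) :=
  r.filter_comp_perm_flatMap_dedup_map_filter e fun x => decide (lo ≤ x ∧ x ≤ hi)
end

section
/- Correctness of join materialization as a list of pairs: let r : List α and s : List β be relations, e : α → K and e' : β → K key functions with DecidableEq K. Then the equi-join join(e = e', r, s) := (r.bind (fun a => s.map (fun b => (a,b)))).filter (fun (a,b) => e a = e' b) is a permutation of ((r.map e).dedup).bind (fun x => (r.filter (fun a => e a = x)).bind (fun a => (s.filter (fun b => e' b = x)).map (fun b => (a,b)))). -/
/-
Grouping `r` by key is a permutation of `r`, and a flatMap over `r` can be regrouped the same way.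
The filtered cross product is the flatMap sending `a` to its partners `b` with `e' b = e a`, and on
the group of key `x` these are exactly the `b` with `e' b = x`.
-/

namespace List

variable {α β γ K : Type*} [DecidableEq K]

theorem flatMap_filter_eq_perm_filter_mem (r : List α) (e : α → K) {keys : List K}
    (hkeys : keys.Nodup) :
    keys.flatMap (fun x => r.filter (fun a => e a = x)) ~ r.filter (fun a => e a ∈ keys) := by
  induction keys with
  | nil => simp
  | cons x keys ih =>
    obtain ⟨hx, hkeys⟩ := nodup_cons.mp hkeys
    rw [flatMap_cons]
    refine ((ih hkeys).append_left _).trans ?_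
    have key_eq : (r.filter fun a => e a ∈ x :: keys).filter (fun a => e a = x) =
        r.filter (fun a => e a = x) := by
      rw [filter_filter]
      congr 1 with a
      by_cases h : e a = x <;> simp [h]
    have key_ne : (r.filter fun a => e a ∈ x :: keys).filter (fun a => !decide (e a = x)) =
        r.filter (fun a => e a ∈ keys) := by
      rw [filter_filter]
      congr 1 with a
      by_cases h : e a = x <;> simp [h, hx]
    simpa only [key_eq, key_ne] using
      filter_append_perm (fun a => decide (e a = x)) (r.filter fun a => e a ∈ x :: keys)

theorem perm_flatMap_dedup_filter (r : List α) (e : α → K) :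
    r ~ (r.map e).dedup.flatMap (fun x => r.filter (fun a => e a = x)) := by
  refine .symm ((flatMap_filter_eq_perm_filter_mem r e (nodup_dedup _)).trans ?_)
  rw [filter_eq_self.mpr]
  intro a ha
  simpa using ⟨a, ha, rfl⟩

theorem flatMap_perm_flatMap_dedup_filter (r : List α) (e : α → K) (f : α → List γ) :
    r.flatMap f ~ (r.map e).dedup.flatMap (fun x => (r.filter (fun a => e a = x)).flatMap f) := by
  simpa only [flatMap_assoc] using (perm_flatMap_dedup_filter r e).flatMap_right f

theorem filter_flatMap_map_pair (r : List α) (s : List β) (p : α → β → Bool) :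
    (r.flatMap (fun a => s.map (fun b => (a, b)))).filter (fun q => p q.1 q.2) =
      r.flatMap (fun a => (s.filter (p a)).map (fun b => (a, b))) := by
  simp only [filter_flatMap, filter_map]
  rfl

end List

theorem join_as_list_of_pairs {α β K : Type*} [DecidableEq K]
    (r : List α) (s : List β) (e : α → K) (e' : β → K) :
    ((r.flatMap (fun a => s.map (fun b => (a, b)))).filter
        (fun p => decide (e p.1 = e' p.2))).Perm
      (((r.map e).dedup).flatMap (fun x =>
        (r.filter (fun a => decide (e a = x))).flatMap (fun a =>
          (s.filter (fun b => decide (e' b = x))).map (fun b => (a, b))))) := by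
  rw [List.filter_flatMap_map_pair r s (fun a b => e a = e' b)]
  refine (List.flatMap_perm_flatMap_dedup_filter r e _).trans (.of_eq ?_)
  refine List.flatMap_congr fun x _ => List.flatMap_congr fun a ha => ?_
  obtain rfl : e a = x := by simpa using (List.mem_filter.mp ha).2
  simp only [eq_comm]
end

section
/- Correctness of the hash-join materialization: for r : List α, s : List β, keys e : α → K, e' : β → K with DecidableEq K, the equi-join r.bind (fun a => (s.filter (fun b => e' b = e a)).map (fun b => (a,b))) equals r.bind (fun a => (((s.map e').dedup).bind (fun x => if x = e a then (s.filter (fun b => e' b = x)).map (fun b => (a,b)) else [])) ) up to permutation (in fact, exact equality holds). -/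
namespace List

theorem flatMap_ite_eq_of_nodup {K γ : Type*} [DecidableEq K] {l : List K} (hl : l.Nodup)
    (k : K) (f : K → List γ) :
    l.flatMap (fun x => if x = k then f x else []) = if k ∈ l then f k else [] := by
  induction l with
  | nil => simp
  | cons a t ih =>
    obtain ⟨ha, ht⟩ := nodup_cons.mp hl
    rw [flatMap_cons, ih ht]
    by_cases hak : a = k
    · subst hak
      simp [ha]
    · simp [hak, Ne.symm hak]

theorem filter_eq_nil_of_notMem_map {β K : Type*} [DecidableEq K] {s : List β} {e' : β → K}
    {k : K} (hk : k ∉ s.map e') : s.filter (fun b => decide (e' b = k)) = [] :=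
  filter_eq_nil_iff.mpr fun b hb hbk => hk (mem_map.mpr ⟨b, hb, of_decide_eq_true hbk⟩)

end List

theorem hash_join_materialization {α β K : Type*} [DecidableEq K]
    (r : List α) (s : List β) (e : α → K) (e' : β → K) :
    r.flatMap (fun a => (s.filter (fun b => decide (e' b = e a))).map (fun b => (a, b)))
      = r.flatMap (fun a => ((s.map e').dedup).flatMap (fun x =>
          if x = e a then (s.filter (fun b => decide (e' b = x))).map (fun b => (a, b))
          else [])) := by
  refine List.flatMap_congr fun a _ => ?_
  rw [List.flatMap_ite_eq_of_nodup (List.nodup_dedup _)]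
  split_ifs with hkey
  · rfl
  · rw [List.mem_dedup] at hkey
    rw [List.filter_eq_nil_of_notMem_map hkey, List.map_nil]
end
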